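/- arXiv:2105.04236 — 4 statements merged into one kernel-verified Lean document; each statement's English description precedes it below -/
import Mathlib

section
/- Let 0 < s < ℓ, L = 2^ℓ, and x₀, x₁ ∈ [0, L). Write x₀ = u₀·2^s + v₀ and x₁ = u₁·2^s + v₁ with v₀, v₁ ∈ [0, 2^s). Let x = (x₀ + x₁) mod L. Then the logical right shift x >> s (i.e., ⌊x / 2^s⌋) equals (u₀ + u₁ - 2^{ℓ-s}·wrap(x₀, x₁, L) + wrap(v₀, v₁, 2^s)) mod 2^{ℓ-s}, where wrap(a, b, M) := 1 if a + b ≥ M, else 0. -/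
/-! Since `2 ^ ℓ = 2 ^ s * 2 ^ (ℓ - s)`, shifting `(x₀ + x₁) mod 2 ^ ℓ` right by `s` bits is the same as
shifting `x₀ + x₁` and reducing mod `2 ^ (ℓ - s)`. The shifted sum is `u₀ + u₁` plus the carry out of
the low parts, which is `wrap v₀ v₁ (2 ^ s)`; the term `2 ^ (ℓ - s) * wrap x₀ x₁ (2 ^ ℓ)` is a
multiple of the modulus and drops out. -/

def wrap (a b M : ℕ) : ℕ := if M ≤ a + b then 1 else 0

theorem wrap_eq_add_div {a b M : ℕ} (ha : a < M) (hb : b < M) : wrap a b M = (a + b) / M := by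
  unfold wrap
  split_ifs with h
  · exact (Nat.div_eq_of_lt_le (by omega) (by omega)).symm
  · exact (Nat.div_eq_of_lt (by omega)).symm

theorem add_div_eq_add_add_wrap {u₀ u₁ v₀ v₁ M : ℕ} (hv₀ : v₀ < M) (hv₁ : v₁ < M) :
    (u₀ * M + v₀ + (u₁ * M + v₁)) / M = u₀ + u₁ + wrap v₀ v₁ M := by
  have hsum : u₀ * M + v₀ + (u₁ * M + v₁) = v₀ + v₁ + (u₀ + u₁) * M := by ring
  rw [hsum, Nat.add_mul_div_right _ _ (by omega), wrap_eq_add_div hv₀ hv₁, add_comm]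

theorem stmt0_general (ℓ s : ℕ) (hsl : s < ℓ)
    (x₀ x₁ u₀ u₁ v₀ v₁ x : ℕ)
    (hd₀ : x₀ = u₀ * 2 ^ s + v₀) (hd₁ : x₁ = u₁ * 2 ^ s + v₁)
    (hv₀ : v₀ < 2 ^ s) (hv₁ : v₁ < 2 ^ s)
    (hx : x = (x₀ + x₁) % 2 ^ ℓ) :
    (x / 2 ^ s : ℤ) =
      ((u₀ : ℤ) + u₁ - 2 ^ (ℓ - s) * wrap x₀ x₁ (2 ^ ℓ) + wrap v₀ v₁ (2 ^ s))
        % 2 ^ (ℓ - s) := by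
  have hsplit : 2 ^ ℓ = 2 ^ s * 2 ^ (ℓ - s) := by rw [← pow_add, Nat.add_sub_cancel' hsl.le]
  have hshift : x / 2 ^ s = (u₀ + u₁ + wrap v₀ v₁ (2 ^ s)) % 2 ^ (ℓ - s) := by
    rw [hx, hsplit, Nat.mod_mul_right_div_self, hd₀, hd₁, add_div_eq_add_add_wrap hv₀ hv₁]
  rw [sub_add_eq_add_sub, Int.sub_mul_emod_self_left]
  exact_mod_cast hshift

theorem stmt0 (ℓ s : ℕ) (hs : 0 < s) (hsl : s < ℓ)
    (x₀ x₁ u₀ u₁ v₀ v₁ x : ℕ)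
    (hx₀ : x₀ < 2 ^ ℓ) (hx₁ : x₁ < 2 ^ ℓ)
    (hd₀ : x₀ = u₀ * 2 ^ s + v₀) (hd₁ : x₁ = u₁ * 2 ^ s + v₁)
    (hv₀ : v₀ < 2 ^ s) (hv₁ : v₁ < 2 ^ s)
    (hx : x = (x₀ + x₁) % 2 ^ ℓ) :
    (x / 2 ^ s : ℤ) =
      ((u₀ : ℤ) + u₁ - 2 ^ (ℓ - s) * wrap x₀ x₁ (2 ^ ℓ) + wrap v₀ v₁ (2 ^ s))
        % 2 ^ (ℓ - s) :=
  stmt0_general ℓ s hsl x₀ x₁ u₀ u₁ v₀ v₁ x hd₀ hd₁ hv₀ hv₁ hx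
end

section
/- Let 0 < s < ℓ, L = 2^ℓ, and x₀, x₁ ∈ [0, L). Write x_b = u_b·2^s + v_b with v_b ∈ [0, 2^s) for b ∈ {0,1}. Define c = wrap(v₀, v₁, 2^s), d = wrap(u₀, u₁, 2^{ℓ-s}), e = 1 if (u₀ + u₁) mod 2^{ℓ-s} = 2^{ℓ-s} − 1 and e = 0 otherwise, and w = wrap(x₀, x₁, L). Then w = d XOR (c AND e). -/
theorem le_mul_add_iff_of_lt_two_mul {T U a r : ℕ} (hr : r < 2 * T) :
    U * T ≤ a * T + r ↔ U ≤ a ∨ (a + 1 = U ∧ T ≤ r) := by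
  rcases le_or_gt U a with hUa | haU
  · simpa [hUa] using (Nat.mul_le_mul_right T hUa).trans (Nat.le_add_right _ r)
  obtain rfl | ha2 : a + 1 = U ∨ a + 2 ≤ U := by omega
  · rw [add_mul, one_mul]
    omega
  · have : (a + 2) * T ≤ U * T := Nat.mul_le_mul_right T ha2
    constructor
    · intro h
      nlinarith
    · omega

theorem add_mod_eq_pred_iff {U a b : ℕ} (ha : a < U) (hb : b < U) :
    (a + b) % U = U - 1 ↔ a + b + 1 = U := by
  rcases lt_or_ge (a + b) U with hab | hab
  · rw [Nat.mod_eq_of_lt hab]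
    omega
  · rw [Nat.mod_eq_sub_mod hab, Nat.mod_eq_of_lt (by omega)]
    omega

theorem wrap_mul_add {T U u₀ u₁ v₀ v₁ : ℕ} (hu₀ : u₀ < U) (hu₁ : u₁ < U)
    (hv₀ : v₀ < T) (hv₁ : v₁ < T) :
    wrap (u₀ * T + v₀) (u₁ * T + v₁) (U * T) =
      wrap u₀ u₁ U ^^^ (wrap v₀ v₁ T &&& if (u₀ + u₁) % U = U - 1 then 1 else 0) := by
  have hsum : u₀ * T + v₀ + (u₁ * T + v₁) = (u₀ + u₁) * T + (v₀ + v₁) := by ring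
  unfold wrap
  rw [hsum]
  simp only [le_mul_add_iff_of_lt_two_mul (show v₀ + v₁ < 2 * T by omega),
    add_mod_eq_pred_iff hu₀ hu₁]
  by_cases hd : U ≤ u₀ + u₁ <;> by_cases hc : T ≤ v₀ + v₁ <;> by_cases he : u₀ + u₁ + 1 = U <;>
    simp [hd, hc, he]
  omega

theorem stmt1_general (ℓ s : ℕ) (hsl : s < ℓ)
    (x₀ x₁ u₀ u₁ v₀ v₁ : ℕ)
    (hx₀ : x₀ < 2 ^ ℓ) (hx₁ : x₁ < 2 ^ ℓ)
    (hd₀ : x₀ = u₀ * 2 ^ s + v₀) (hd₁ : x₁ = u₁ * 2 ^ s + v₁)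
    (hv₀ : v₀ < 2 ^ s) (hv₁ : v₁ < 2 ^ s)
    (c d e w : ℕ)
    (hc : c = wrap v₀ v₁ (2 ^ s))
    (hd : d = wrap u₀ u₁ (2 ^ (ℓ - s)))
    (he : e = if (u₀ + u₁) % 2 ^ (ℓ - s) = 2 ^ (ℓ - s) - 1 then 1 else 0)
    (hw : w = wrap x₀ x₁ (2 ^ ℓ)) :
    w = d ^^^ (c &&& e) := by
  have hL : 2 ^ ℓ = 2 ^ (ℓ - s) * 2 ^ s := by
    rw [← pow_add, Nat.sub_add_cancel hsl.le]
  subst hc hd he hw hd₀ hd₁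
  rw [hL] at hx₀ hx₁ ⊢
  exact wrap_mul_add (Nat.lt_of_mul_lt_mul_right (a := 2 ^ s) (by omega))
    (Nat.lt_of_mul_lt_mul_right (a := 2 ^ s) (by omega)) hv₀ hv₁

theorem stmt1 (ℓ s : ℕ) (hs : 0 < s) (hsl : s < ℓ)
    (x₀ x₁ u₀ u₁ v₀ v₁ : ℕ)
    (hx₀ : x₀ < 2 ^ ℓ) (hx₁ : x₁ < 2 ^ ℓ)
    (hd₀ : x₀ = u₀ * 2 ^ s + v₀) (hd₁ : x₁ = u₁ * 2 ^ s + v₁)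
    (hv₀ : v₀ < 2 ^ s) (hv₁ : v₁ < 2 ^ s)
    (c d e w : ℕ)
    (hc : c = wrap v₀ v₁ (2 ^ s))
    (hd : d = wrap u₀ u₁ (2 ^ (ℓ - s)))
    (he : e = if (u₀ + u₁) % 2 ^ (ℓ - s) = 2 ^ (ℓ - s) - 1 then 1 else 0)
    (hw : w = wrap x₀ x₁ (2 ^ ℓ)) :
    w = d ^^^ (c &&& e) :=
  stmt1_general ℓ s hsl x₀ x₁ u₀ u₁ v₀ v₁ hx₀ hx₁ hd₀ hd₁ hv₀ hv₁ c d e w hc hd he hw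
end

section
/- Let 0 < s < ℓ, L = 2^ℓ, and x₀, x₁ ∈ [0, L) with x = (x₀ + x₁) mod L. Write x_b = u_b·2^s + v_b with v_b ∈ [0, 2^s). Then TR(x, s) = (TR(x₀, s) + TR(x₁, s) + wrap(v₀, v₁, 2^s)) mod 2^{ℓ-s}, i.e., truncate-and-reduce of the secret equals the sum of truncate-and-reduce of the shares plus the lower-bits wrap, mod 2^{ℓ-s}. -/
theorem stmt7 (ℓ s : ℕ) (hs : 0 < s) (hsl : s < ℓ)
    (x₀ x₁ u₀ u₁ v₀ v₁ x : ℕ)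
    (hx₀ : x₀ < 2 ^ ℓ) (hx₁ : x₁ < 2 ^ ℓ)
    (hd₀ : x₀ = u₀ * 2 ^ s + v₀) (hd₁ : x₁ = u₁ * 2 ^ s + v₁)
    (hv₀ : v₀ < 2 ^ s) (hv₁ : v₁ < 2 ^ s)
    (hx : x = (x₀ + x₁) % 2 ^ ℓ) :
    x / 2 ^ s = (x₀ / 2 ^ s + x₁ / 2 ^ s + wrap v₀ v₁ (2 ^ s)) % 2 ^ (ℓ - s) := by
  have hpow : 2 ^ ℓ = 2 ^ s * 2 ^ (ℓ - s) := by
    rw [← pow_add]; congr 1; omega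
  subst hx
  rw [hpow, Nat.mod_mul_right_div_self]
  congr 1
  have h0 : x₀ / 2 ^ s = u₀ := by
    rw [hd₀]; rw [mul_comm, Nat.mul_add_div (by positivity), Nat.div_eq_of_lt hv₀]; omega
  have h1 : x₁ / 2 ^ s = u₁ := by
    rw [hd₁]; rw [mul_comm, Nat.mul_add_div (by positivity), Nat.div_eq_of_lt hv₁]; omega
  rw [h0, h1]
  unfold wrap
  split
  · have : x₀ + x₁ = (u₀ + u₁ + 1) * 2 ^ s + (v₀ + v₁ - 2 ^ s) := by
      rw [hd₀, hd₁]; ring_nf; omega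
    rw [this, mul_comm, Nat.mul_add_div (by positivity),
      Nat.div_eq_of_lt (by omega)]
  · have : x₀ + x₁ = (u₀ + u₁) * 2 ^ s + (v₀ + v₁) := by
      rw [hd₀, hd₁]; ring
    rw [this, mul_comm, Nat.mul_add_div (by positivity),
      Nat.div_eq_of_lt (by omega)]
end

section
/- Let 0 < s < ℓ, L = 2^ℓ, and x₀, x₁ ∈ [0, L). Write x_b = u_b·2^s + v_b with v_b ∈ [0, 2^s). Let c = wrap(v₀, v₁, 2^s) and e = 1 iff (u₀ + u₁) mod 2^{ℓ-s} = 2^{ℓ-s} − 1. Then wrap(x₀, x₁, L) = 1 if and only if either u₀ + u₁ ≥ 2^{ℓ-s}, or (u₀ + u₁ = 2^{ℓ-s} − 1 and v₀ + v₁ ≥ 2^s). -/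
theorem stmt10 (ℓ s : ℕ) (hs : 0 < s) (hsl : s < ℓ)
    (x₀ x₁ u₀ u₁ v₀ v₁ : ℕ)
    (hx₀ : x₀ < 2 ^ ℓ) (hx₁ : x₁ < 2 ^ ℓ)
    (hd₀ : x₀ = u₀ * 2 ^ s + v₀) (hd₁ : x₁ = u₁ * 2 ^ s + v₁)
    (hv₀ : v₀ < 2 ^ s) (hv₁ : v₁ < 2 ^ s) :
    wrap x₀ x₁ (2 ^ ℓ) = 1 ↔
      (2 ^ (ℓ - s) ≤ u₀ + u₁ ∨
        (u₀ + u₁ = 2 ^ (ℓ - s) - 1 ∧ 2 ^ s ≤ v₀ + v₁)) := by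
  have hL : 2 ^ ℓ = 2 ^ (ℓ - s) * 2 ^ s := by
    rw [← pow_add]; congr 1; omega
  set K := 2 ^ (ℓ - s) with hK
  set S := 2 ^ s with hS
  have hK1 : 1 ≤ K := Nat.one_le_two_pow
  have hS1 : 1 ≤ S := Nat.one_le_two_pow
  have E : K * S ≤ (u₀ * S + v₀) + (u₁ * S + v₁) ↔
      (K ≤ u₀ + u₁ ∨ (u₀ + u₁ = K - 1 ∧ S ≤ v₀ + v₁)) := by
    rcases le_or_gt K (u₀ + u₁) with h | h
    · have h2 : K * S ≤ (u₀ + u₁) * S := Nat.mul_le_mul_right _ h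
      rw [add_mul] at h2
      exact ⟨fun _ => Or.inl h, fun _ => by omega⟩
    · have h3 : (K - 1) * S = K * S - S := by rw [Nat.sub_mul, one_mul]
      rcases eq_or_lt_of_le (show u₀ + u₁ ≤ K - 1 by omega) with heq | hlt
      · have h4 : (u₀ + u₁) * S = (K - 1) * S := by rw [heq]
        rw [add_mul] at h4
        have h5 : S ≤ K * S := Nat.le_mul_of_pos_left _ hK1
        constructor
        · intro hw; exact Or.inr ⟨heq, by omega⟩
        · rintro (h' | ⟨_, hv⟩)
          · omega
          · omega
      · have h5 : (u₀ + u₁) * S ≤ (K - 2) * S := Nat.mul_le_mul_right _ (by omega)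
        have h6 : (K - 2) * S = K * S - 2 * S := by rw [Nat.sub_mul]
        have h7 : 2 * S ≤ K * S := Nat.mul_le_mul_right _ (by omega)
        rw [add_mul] at h5
        constructor
        · intro hw; omega
        · rintro (h' | ⟨heq, _⟩) <;> omega
  subst hd₀ hd₁
  unfold wrap
  rw [hL]
  split_ifs with h
  · simpa using E.mp h
  · exact iff_of_false (by simp) (fun hr => h (E.mpr hr))
end
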